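/- arXiv:1902.05716 — 4 statements merged into one kernel-verified Lean document; each statement's English description precedes it below -/
import Mathlib

section
/- Let L > 0, T > 0, g ∈ ℝ, and let u : [0,T] × [−L,L] → ℂ be twice continuously differentiable and satisfy i ∂_t u(t,x) = −(1/2) ∂_xx u(t,x) + g |u(t,x)|² u(t,x) on [0,T] × [−L,L], with u(t,−L) = u(t,L) = 0 and additionally ∂_x u(t,−L) = ∂_x u(t,L) = 0 for all t ∈ [0,T]. Then the impulse functional P(t) = ∫_{−L}^{L} conj(u(t,x)) · (−i) ∂_x u(t,x) dx is constant in t, i.e. P(t) = P(0) for all t ∈ [0,T]. -/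
/-!
Differentiating the impulse density `conj u · (-i ∂ₓu)` in time and integrating the term
`conj u · (-i ∂ₓ∂ₜu)` by parts (`u = 0` at `±L`, and `∂ₓ∂ₜu = ∂ₜ∂ₓu` since `u` is `C²`) leaves the
integrand `conj (∂ₜu) · (-i ∂ₓu) - conj (∂ₓu) · (-i ∂ₜu)`. Substituting `∂ₜu` from the equation
turns it into the `x`-derivative of `-½ |∂ₓu|² + (g/2) |u|⁴`, which vanishes at `±L` because `u`
and `∂ₓu` do. Instead of differentiating under the integral sign, `P t - P 0` is written as the
double integral of the time derivative of the density (fundamental theorem of calculus in `t`,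
then Fubini).
-/

open MeasureTheory Set Function Complex ComplexConjugate

section PartialDerivatives

variable {E : Type*} [NormedAddCommGroup E] [NormedSpace ℝ E]

theorem DifferentiableAt.hasDerivAt_slice_left {f : ℝ × ℝ → E} {t x : ℝ}
    (hf : DifferentiableAt ℝ f (t, x)) :
    HasDerivAt (fun s => f (s, x)) (fderiv ℝ f (t, x) (1, 0)) t :=
  hf.hasFDerivAt.comp_hasDerivAt t ((hasDerivAt_id t).prodMk (hasDerivAt_const t x))

theorem DifferentiableAt.hasDerivAt_slice_right {f : ℝ × ℝ → E} {t x : ℝ}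
    (hf : DifferentiableAt ℝ f (t, x)) :
    HasDerivAt (fun y => f (t, y)) (fderiv ℝ f (t, x) (0, 1)) x :=
  hf.hasFDerivAt.comp_hasDerivAt x ((hasDerivAt_const x t).prodMk (hasDerivAt_id x))

noncomputable def derivFst (u : ℝ → ℝ → E) (t x : ℝ) : E := deriv (fun s => u s x) t

noncomputable def derivSnd (u : ℝ → ℝ → E) (t x : ℝ) : E := deriv (u t) x

variable {u : ℝ → ℝ → E} {t x : ℝ}

theorem derivFst_eq_fderiv (hu : DifferentiableAt ℝ (uncurry u) (t, x)) :
    derivFst u t x = fderiv ℝ (uncurry u) (t, x) (1, 0) :=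
  hu.hasDerivAt_slice_left.deriv

theorem derivSnd_eq_fderiv (hu : DifferentiableAt ℝ (uncurry u) (t, x)) :
    derivSnd u t x = fderiv ℝ (uncurry u) (t, x) (0, 1) :=
  hu.hasDerivAt_slice_right.deriv

theorem hasDerivAt_derivFst (hu : DifferentiableAt ℝ (uncurry u) (t, x)) :
    HasDerivAt (fun s => u s x) (derivFst u t x) t := by
  rw [derivFst_eq_fderiv hu]
  exact hu.hasDerivAt_slice_left

theorem hasDerivAt_derivSnd (hu : DifferentiableAt ℝ (uncurry u) (t, x)) :
    HasDerivAt (u t) (derivSnd u t x) x := by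
  rw [derivSnd_eq_fderiv hu]
  exact hu.hasDerivAt_slice_right

variable {m n : WithTop ℕ∞}

theorem ContDiff.uncurry_derivFst (hu : ContDiff ℝ n (uncurry u)) (hmn : m + 1 ≤ n) :
    ContDiff ℝ m (uncurry (derivFst u)) := by
  have hdiff : Differentiable ℝ (uncurry u) :=
    (hu.of_le (le_add_self.trans hmn)).differentiable one_ne_zero
  rw [show uncurry (derivFst u) = fun p => fderiv ℝ (uncurry u) p (1, 0) from
    funext fun p => derivFst_eq_fderiv (hdiff p)]
  exact (hu.fderiv_right hmn).clm_apply contDiff_const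

theorem ContDiff.uncurry_derivSnd (hu : ContDiff ℝ n (uncurry u)) (hmn : m + 1 ≤ n) :
    ContDiff ℝ m (uncurry (derivSnd u)) := by
  have hdiff : Differentiable ℝ (uncurry u) :=
    (hu.of_le (le_add_self.trans hmn)).differentiable one_ne_zero
  rw [show uncurry (derivSnd u) = fun p => fderiv ℝ (uncurry u) p (0, 1) from
    funext fun p => derivSnd_eq_fderiv (hdiff p)]
  exact (hu.fderiv_right hmn).clm_apply contDiff_const

theorem derivFst_derivSnd_comm (hu : ContDiff ℝ 2 (uncurry u)) :
    derivFst (derivSnd u) = derivSnd (derivFst u) := by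
  ext t x
  have hdiff : Differentiable ℝ (uncurry u) := hu.differentiable (by norm_num)
  have hD : DifferentiableAt ℝ (fderiv ℝ (uncurry u)) (t, x) :=
    (hu.fderiv_right (m := 1) (by norm_num)).differentiable (by norm_num) _
  have h₁ : HasDerivAt (fun s => derivSnd u s x)
      (fderiv ℝ (fderiv ℝ (uncurry u)) (t, x) (1, 0) (0, 1)) t := by
    simp_rw [derivSnd_eq_fderiv (hdiff _)]
    simpa using hD.hasDerivAt_slice_left.clm_apply (hasDerivAt_const t ((0 : ℝ), (1 : ℝ)))
  have h₂ : HasDerivAt (fun y => derivFst u t y)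
      (fderiv ℝ (fderiv ℝ (uncurry u)) (t, x) (0, 1) (1, 0)) x := by
    simp_rw [derivFst_eq_fderiv (hdiff _)]
    simpa using hD.hasDerivAt_slice_right.clm_apply (hasDerivAt_const x ((1 : ℝ), (0 : ℝ)))
  rw [derivFst, derivSnd, h₁.deriv, h₂.deriv]
  exact hu.contDiffAt.isSymmSndFDerivAt (by simp) _ _

end PartialDerivatives

theorem integral_sub_integral_eq_integral_integral_of_hasDerivAt {E : Type*}
    [NormedAddCommGroup E] [NormedSpace ℝ E] [CompleteSpace E] {F F' : ℝ → ℝ → E}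
    {a b t₀ t₁ : ℝ} (hderiv : ∀ s x, HasDerivAt (fun s => F s x) (F' s x) s)
    (hF : Continuous (uncurry F)) (hF' : Continuous (uncurry F')) :
    (∫ x in a..b, F t₁ x) - ∫ x in a..b, F t₀ x
      = ∫ s in t₀..t₁, ∫ x in a..b, F' s x := by
  have hslice : ∀ x, F t₁ x - F t₀ x = ∫ s in t₀..t₁, F' s x := fun x =>
    (intervalIntegral.integral_eq_sub_of_hasDerivAt (fun s _ => hderiv s x)
      ((hF'.comp (continuous_id.prodMk continuous_const)).intervalIntegrable _ _)).symm
  have hFt : ∀ t, IntervalIntegrable (F t) volume a b := fun t =>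
    (hF.comp (continuous_const.prodMk continuous_id)).intervalIntegrable _ _
  rw [← intervalIntegral.integral_sub (hFt t₁) (hFt t₀)]
  simp_rw [hslice]
  refine intervalIntegral_intervalIntegral_swap ?_
  have hcompact : IntegrableOn (uncurry fun x s => F' s x) (uIcc a b ×ˢ uIcc t₀ t₁) :=
    (hF'.comp continuous_swap).continuousOn.integrableOn_compact
      (isCompact_uIcc.prod isCompact_uIcc)
  exact hcompact.mono_set (prod_mono uIoc_subset_uIcc uIoc_subset_uIcc)

theorem HasDerivAt.conj_mul_self {f : ℝ → ℂ} {f' : ℂ} {x : ℝ} (hf : HasDerivAt f f' x) :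
    HasDerivAt (fun y => conj (f y) * f y) (conj f' * f x + conj (f x) * f') x :=
  hf.star.mul hf

theorem integral_conj_mul_deriv_eq_neg {a b : ℝ} {φ φ' ψ ψ' : ℝ → ℂ}
    (hφ : ∀ x, HasDerivAt φ (φ' x) x) (hψ : ∀ x, HasDerivAt ψ (ψ' x) x)
    (hφ' : Continuous φ') (hψ' : Continuous ψ') (ha : φ a = 0) (hb : φ b = 0) :
    ∫ x in a..b, conj (φ x) * ψ' x = -∫ x in a..b, conj (φ' x) * ψ x := by
  rw [intervalIntegral.integral_mul_deriv_eq_deriv_mul (u := fun x => conj (φ x))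
    (fun x _ => (hφ x).star) (fun x _ => hψ x) (hφ'.star.intervalIntegrable _ _)
    (hψ'.intervalIntegrable _ _), ha, hb]
  simp only [map_zero, zero_mul, sub_self, zero_sub, Complex.star_def]

theorem impulse_rate_eq_of_gpe {g : ℝ} {z z' z'' w : ℂ}
    (h : I * w = -(1 / 2 : ℂ) * z'' + (g : ℂ) * ((‖z‖ : ℂ)) ^ 2 * z) :
    conj w * (-I * z') - conj z' * (-I * w)
      = -(1 / 2 : ℂ) * (conj z'' * z' + conj z' * z'')
        + g * (conj z * z) * (conj z' * z + conj z * z') := by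
  rw [← conj_mul'] at h
  have hc := congrArg conj h
  simp only [map_mul, map_add, map_neg, map_div₀, map_one, map_ofNat, conj_I, conj_ofReal,
    conj_conj] at hc
  linear_combination z' * hc + conj z' * h

theorem integral_impulse_rate_eq_zero {a b g : ℝ} (hab : a ≤ b) {φ ψ ψ' : ℝ → ℂ}
    (hφ : ContDiff ℝ 2 φ) (hψ : ∀ x, HasDerivAt ψ (ψ' x) x) (hψ' : Continuous ψ')
    (hpde : ∀ x ∈ Icc a b,
      I * ψ x = -(1 / 2 : ℂ) * deriv (deriv φ) x + (g : ℂ) * ((‖φ x‖ : ℂ)) ^ 2 * φ x)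
    (ha : φ a = 0) (hb : φ b = 0) (hda : deriv φ a = 0) (hdb : deriv φ b = 0) :
    ∫ x in a..b, (conj (ψ x) * (-I * deriv φ x) + conj (φ x) * (-I * ψ' x)) = 0 := by
  set φ' := deriv φ
  set φ'' := deriv φ'
  have hφ₁ : ContDiff ℝ 1 φ' := (contDiff_succ_iff_deriv.1 hφ).2.2
  have hdφ : ∀ x, HasDerivAt φ (φ' x) x := fun x =>
    (hφ.differentiable two_ne_zero x).hasDerivAt
  have hdφ' : ∀ x, HasDerivAt φ' (φ'' x) x := fun x =>
    (hφ₁.differentiable one_ne_zero x).hasDerivAt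
  have hcψ : Continuous ψ := continuous_iff_continuousAt.2 fun x => (hψ x).continuousAt
  have hparts : ∫ x in a..b, conj (φ x) * (-I * ψ' x)
      = -∫ x in a..b, conj (φ' x) * (-I * ψ x) :=
    integral_conj_mul_deriv_eq_neg hdφ (fun x => (hψ x).const_mul (-I)) hφ₁.continuous
      (continuous_const.mul hψ') ha hb
  set Φ : ℝ → ℂ := fun x =>
    -(1 / 2 : ℂ) * (conj (φ' x) * φ' x) + g / 2 * (conj (φ x) * φ x) ^ 2
  set Φ' : ℝ → ℂ := fun x => -(1 / 2 : ℂ) * (conj (φ'' x) * φ' x + conj (φ' x) * φ'' x)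
    + g * (conj (φ x) * φ x) * (conj (φ' x) * φ x + conj (φ x) * φ' x)
  have hΦ : ∀ x, HasDerivAt Φ (Φ' x) x := by
    intro x
    have h₁ := ((hdφ' x).conj_mul_self).const_mul (-(1 / 2 : ℂ))
    have h₂ := ((hdφ x).conj_mul_self.pow 2).const_mul ((g : ℂ) / 2)
    refine (h₁.add h₂).congr_deriv ?_
    simp only [Φ']
    norm_num
    ring
  have hcΦ' : Continuous Φ' := by
    have := hφ₁.continuous_deriv le_rfl
    simp only [Φ']
    fun_prop
  have hint₁ : IntervalIntegrable (fun x => conj (ψ x) * (-I * φ' x)) volume a b :=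
    (hcψ.star.mul (continuous_const.mul hφ₁.continuous)).intervalIntegrable _ _
  have hint₂ : IntervalIntegrable (fun x => conj (φ x) * (-I * ψ' x)) volume a b :=
    (hφ.continuous.star.mul (continuous_const.mul hψ')).intervalIntegrable _ _
  have hint₃ : IntervalIntegrable (fun x => conj (φ' x) * (-I * ψ x)) volume a b :=
    (hφ₁.continuous.star.mul (continuous_const.mul hcψ)).intervalIntegrable _ _
  rw [intervalIntegral.integral_add hint₁ hint₂, hparts, ← sub_eq_add_neg,
    ← intervalIntegral.integral_sub hint₁ hint₃,
    intervalIntegral.integral_congr fun x hx =>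
      impulse_rate_eq_of_gpe (hpde x (uIcc_of_le hab ▸ hx)),
    intervalIntegral.integral_eq_sub_of_hasDerivAt (fun x _ => hΦ x)
      (hcΦ'.intervalIntegrable _ _)]
  simp [Φ, ha, hb, hda, hdb]

noncomputable def impulseDensity (u : ℝ → ℝ → ℂ) (t x : ℝ) : ℂ :=
  conj (u t x) * (-I * derivSnd u t x)

theorem hasDerivAt_impulseDensity {u : ℝ → ℝ → ℂ} (hu : ContDiff ℝ 2 (uncurry u))
    (t x : ℝ) :
    HasDerivAt (fun s => impulseDensity u s x)
      (conj (derivFst u t x) * (-I * derivSnd u t x)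
        + conj (u t x) * (-I * derivSnd (derivFst u) t x)) t := by
  have hux : ContDiff ℝ 1 (uncurry (derivSnd u)) := hu.uncurry_derivSnd (by norm_num)
  rw [← derivFst_derivSnd_comm hu]
  exact (hasDerivAt_derivFst (hu.differentiable two_ne_zero _)).star.mul
    ((hasDerivAt_derivFst (hux.differentiable one_ne_zero _)).const_mul (-I))

theorem gpe_impulse_conservation_general
    (L T g : ℝ) (hL : 0 < L)
    (u : ℝ → ℝ → ℂ)
    (hreg : ContDiff ℝ 2 (fun p : ℝ × ℝ => u p.1 p.2))
    (hpde : ∀ t ∈ Set.Icc (0 : ℝ) T, ∀ x ∈ Set.Icc (-L) L,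
      Complex.I * deriv (fun s => u s x) t
        = -(1/2 : ℂ) * deriv (deriv (fun y => u t y)) x
          + (g : ℂ) * ((‖u t x‖ : ℂ))^2 * u t x)
    (hbc : ∀ t ∈ Set.Icc (0 : ℝ) T, u t (-L) = 0 ∧ u t L = 0)
    (hbcx : ∀ t ∈ Set.Icc (0 : ℝ) T,
      deriv (fun y => u t y) (-L) = 0 ∧ deriv (fun y => u t y) L = 0) :
    ∀ t ∈ Set.Icc (0 : ℝ) T,
      (∫ x in (-L)..L,
          (starRingEnd ℂ) (u t x) * (-Complex.I * deriv (fun y => u t y) x))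
        = ∫ x in (-L)..L,
          (starRingEnd ℂ) (u 0 x) * (-Complex.I * deriv (fun y => u 0 y) x) := by
  intro t ht
  have hu : ContDiff ℝ 2 (uncurry u) := hreg
  have hut : ContDiff ℝ 1 (uncurry (derivFst u)) := hu.uncurry_derivFst (by norm_num)
  have hux : ContDiff ℝ 1 (uncurry (derivSnd u)) := hu.uncurry_derivSnd (by norm_num)
  have hutx : Continuous (uncurry (derivSnd (derivFst u))) :=
    (hut.uncurry_derivSnd (m := 0) (by norm_num)).continuous
  have hrate : ∀ s ∈ Icc 0 T, ∫ x in (-L)..L,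
      (conj (derivFst u s x) * (-I * derivSnd u s x)
        + conj (u s x) * (-I * derivSnd (derivFst u) s x)) = 0 := fun s hs =>
    integral_impulse_rate_eq_zero (by linarith) (hu.comp (contDiff_const.prodMk contDiff_id))
      (fun x => hasDerivAt_derivSnd (hut.differentiable one_ne_zero _))
      (hutx.comp (continuous_const.prodMk continuous_id))
      (hpde s hs) (hbc s hs).1 (hbc s hs).2 (hbcx s hs).1 (hbcx s hs).2
  show ∫ x in (-L)..L, impulseDensity u t x = ∫ x in (-L)..L, impulseDensity u 0 x
  rw [← sub_eq_zero, integral_sub_integral_eq_integral_integral_of_hasDerivAt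
    (hasDerivAt_impulseDensity hu) (hu.continuous.star.mul (continuous_const.mul hux.continuous))
    ((hut.continuous.star.mul (continuous_const.mul hux.continuous)).add
      (hu.continuous.star.mul (continuous_const.mul hutx)))]
  refine (intervalIntegral.integral_congr fun s hs => hrate s ?_).trans
    intervalIntegral.integral_zero
  exact Icc_subset_Icc_right ht.2 (uIcc_of_le ht.1 ▸ hs)

/-- Impulse conservation for the 1D Gross-Pitaevskii equation
`i ∂_t u = -(1/2) ∂_xx u + g |u|² u` on `[-L, L]` with homogeneous Dirichlet
boundary values for `u` and `∂_x u`: the impulse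
`P(t) = ∫ conj(u) (-i ∂_x) u dx` is constant. -/
theorem gpe_impulse_conservation
    (L T g : ℝ) (hL : 0 < L) (hT : 0 < T)
    (u : ℝ → ℝ → ℂ)
    (hreg : ContDiff ℝ 2 (fun p : ℝ × ℝ => u p.1 p.2))
    (hpde : ∀ t ∈ Set.Icc (0 : ℝ) T, ∀ x ∈ Set.Icc (-L) L,
      Complex.I * deriv (fun s => u s x) t
        = -(1/2 : ℂ) * deriv (deriv (fun y => u t y)) x
          + (g : ℂ) * ((‖u t x‖ : ℂ))^2 * u t x)
    (hbc : ∀ t ∈ Set.Icc (0 : ℝ) T, u t (-L) = 0 ∧ u t L = 0)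
    (hbcx : ∀ t ∈ Set.Icc (0 : ℝ) T,
      deriv (fun y => u t y) (-L) = 0 ∧ deriv (fun y => u t y) L = 0) :
    ∀ t ∈ Set.Icc (0 : ℝ) T,
      (∫ x in (-L)..L,
          (starRingEnd ℂ) (u t x) * (-Complex.I * deriv (fun y => u t y) x))
        = ∫ x in (-L)..L,
          (starRingEnd ℂ) (u 0 x) * (-Complex.I * deriv (fun y => u 0 y) x) :=
  gpe_impulse_conservation_general L T g hL u hreg hpde hbc hbcx
end

section
/- Let M ≥ 2 be an integer, Δt > 0, Δx > 0, g ∈ ℝ, and let u, v : {0,1,…,M} → ℂ satisfy u_0 = u_M = v_0 = v_M = 0 and, for every j ∈ {1,…,M−1}, the semi-implicit Crank–Nicolson relation i (v_j − u_j)/Δt = −(1/2) [ (v_{j−1} − 2 v_j + v_{j+1})/Δx² + (u_{j−1} − 2 u_j + u_{j+1})/Δx² ] + (g/2) (|v_j|² + |u_j|²) (v_j + u_j)/2. Then the discrete mass is conserved: Σ_{j=0}^{M} |v_j|² = Σ_{j=0}^{M} |u_j|². -/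
/-!
Multiply the scheme at node `j` by `conj (v j + u j)` and take imaginary parts. On the left this
gives `dt⁻¹ (|v j|² - |u j|²)`. On the right the nonlinear term contributes a real multiple of
`|v j + u j|²`, hence nothing, and the discrete Laplacian of `w = v + u` contributes
`Im (conj (w j) Δw j)`, whose sum over the grid vanishes by summation by parts under the Dirichlet
boundary conditions.
-/

open Finset ComplexConjugate

namespace Complex

theorem im_conj_add_mul_I_mul_sub (a b : ℂ) :
    (conj (a + b) * (I * (a - b))).im = ‖a‖ ^ 2 - ‖b‖ ^ 2 := by
  simp only [Complex.sq_norm, normSq_apply, mul_im, mul_re, add_re, add_im, sub_re, sub_im,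
    conj_re, conj_im, I_re, I_im]
  ring

theorem im_conj_mul_ofReal_mul_add_ofReal_mul (z x : ℂ) (r s : ℝ) :
    (conj z * (r * x + s * z)).im = r * (conj z * x).im := by
  simp only [mul_im, mul_re, add_re, add_im, conj_re, conj_im, ofReal_re, ofReal_im]
  ring

theorem im_sum_conj_mul_discrete_laplacian (w : ℕ → ℂ) (M : ℕ) (h0 : w 0 = 0) (hM : w M = 0) :
    (∑ j ∈ range (M + 1), conj (w j) * (w (j - 1) - 2 * w j + w (j + 1))).im = 0 := by
  have backward : ∑ j ∈ range (M + 1), conj (w j) * w (j - 1)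
      = ∑ j ∈ range M, conj (conj (w j) * w (j + 1)) := by
    simp [sum_range_succ', h0, mul_comm]
  have forward : ∑ j ∈ range (M + 1), conj (w j) * w (j + 1)
      = ∑ j ∈ range M, conj (w j) * w (j + 1) := by
    simp [sum_range_succ, hM]
  have expand : ∑ j ∈ range (M + 1), conj (w j) * (w (j - 1) - 2 * w j + w (j + 1))
      = ∑ j ∈ range (M + 1), conj (w j) * w (j - 1) + ∑ j ∈ range (M + 1), conj (w j) * w (j + 1)
        - 2 * ∑ j ∈ range (M + 1), ((‖w j‖ ^ 2 : ℝ) : ℂ) := by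
    simp only [mul_sum, ← sum_add_distrib, ← sum_sub_distrib, ofReal_pow, ← conj_mul']
    exact sum_congr rfl fun j _ => by ring
  rw [expand, backward, forward, ← sum_add_distrib, ← ofReal_sum, sub_im, im_sum]
  simp only [add_im, conj_im, neg_add_cancel, sum_const_zero, mul_im, ofReal_im, im_ofNat,
    mul_zero, zero_mul, add_zero, sub_zero]

end Complex

open Complex in
theorem cn_discrete_mass_conservation_general
    (M : ℕ) (dt dx g : ℝ) (hdt : 0 < dt)
    (u v : ℕ → ℂ)
    (hu0 : u 0 = 0) (huM : u M = 0) (hv0 : v 0 = 0) (hvM : v M = 0)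
    (hscheme : ∀ j : ℕ, 1 ≤ j → j < M →
      Complex.I * (v j - u j) / (dt : ℂ)
        = -(1/2 : ℂ) * ((v (j-1) - 2 * v j + v (j+1)) / (dx : ℂ)^2
              + (u (j-1) - 2 * u j + u (j+1)) / (dx : ℂ)^2)
          + ((g : ℂ) / 2) * (((‖v j‖^2 + ‖u j‖^2 : ℝ)) : ℂ)
              * (v j + u j) / 2) :
    ∑ j ∈ Finset.range (M+1), ‖v j‖^2 = ∑ j ∈ Finset.range (M+1), ‖u j‖^2 := by
  set w : ℕ → ℂ := fun j => v j + u j with hw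
  have local_balance : ∀ j ∈ range (M + 1), ‖v j‖ ^ 2 - ‖u j‖ ^ 2
      = -(dt / (2 * dx ^ 2)) * (conj (w j) * (w (j - 1) - 2 * w j + w (j + 1))).im := by
    intro j hj
    obtain rfl | rfl | ⟨hj1, hjM⟩ : j = 0 ∨ j = M ∨ (1 ≤ j ∧ j < M) := by
      simp only [mem_range] at hj; omega
    · simp [hw, hu0, hv0]
    · simp [hw, huM, hvM]
    have hstep : I * (v j - u j) = dt * (((-(1 / (2 * dx ^ 2)) : ℝ) : ℂ)
        * (w (j - 1) - 2 * w j + w (j + 1)) + ((g * (‖v j‖ ^ 2 + ‖u j‖ ^ 2) / 4 : ℝ) : ℂ) * w j) := by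
      have hscheme_j := hscheme j hj1 hjM
      rw [div_eq_iff (ofReal_ne_zero.mpr hdt.ne')] at hscheme_j
      rw [hscheme_j, hw]
      push_cast
      ring
    rw [← im_conj_add_mul_I_mul_sub, hstep, mul_left_comm, im_ofReal_mul,
      im_conj_mul_ofReal_mul_add_ofReal_mul]
    ring
  rw [← sub_eq_zero, ← sum_sub_distrib, sum_congr rfl local_balance, ← mul_sum, ← im_sum,
    im_sum_conj_mul_discrete_laplacian w M (by simp [hw, hu0, hv0]) (by simp [hw, huM, hvM]),
    mul_zero]

/-- Discrete mass conservation of the semi-implicit Crank-Nicolson scheme for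
the Gross-Pitaevskii equation with homogeneous Dirichlet boundary values. -/
theorem cn_discrete_mass_conservation
    (M : ℕ) (hM : 2 ≤ M) (dt dx g : ℝ) (hdt : 0 < dt) (hdx : 0 < dx)
    (u v : ℕ → ℂ)
    (hu0 : u 0 = 0) (huM : u M = 0) (hv0 : v 0 = 0) (hvM : v M = 0)
    (hscheme : ∀ j : ℕ, 1 ≤ j → j < M →
      Complex.I * (v j - u j) / (dt : ℂ)
        = -(1/2 : ℂ) * ((v (j-1) - 2 * v j + v (j+1)) / (dx : ℂ)^2
              + (u (j-1) - 2 * u j + u (j+1)) / (dx : ℂ)^2)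
          + ((g : ℂ) / 2) * (((‖v j‖^2 + ‖u j‖^2 : ℝ)) : ℂ)
              * (v j + u j) / 2) :
    ∑ j ∈ Finset.range (M+1), ‖v j‖^2 = ∑ j ∈ Finset.range (M+1), ‖u j‖^2 :=
  cn_discrete_mass_conservation_general M dt dx g hdt u v hu0 huM hv0 hvM hscheme
end

section
/- Let M ≥ 2 be an integer, Δt > 0, Δx > 0, g ∈ ℝ, and let u, v : {0,1,…,M} → ℂ satisfy u_0 = u_M = v_0 = v_M = 0 and, for every j ∈ {1,…,M−1}, the semi-implicit Crank–Nicolson relation i (v_j − u_j)/Δt = −(1/2) [ (v_{j−1} − 2 v_j + v_{j+1})/Δx² + (u_{j−1} − 2 u_j + u_{j+1})/Δx² ] + (g/2) (|v_j|² + |u_j|²) (v_j + u_j)/2. Then the discrete energy is conserved: (1/(2Δx²)) Σ_{j=0}^{M−1} |v_{j+1} − v_j|² + (g/4) Σ_{j=1}^{M−1} |v_j|⁴ = (1/(2Δx²)) Σ_{j=0}^{M−1} |u_{j+1} − u_j|² + (g/4) Σ_{j=1}^{M−1} |u_j|⁴. -/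
/-!
Multiply the scheme at node `j` by `conj (v j - u j)` and take real parts. The time difference
contributes `i |v j - u j|² / Δt`, which is purely imaginary, and the averaged nonlinearity
contributes `(g/4) (|v j|⁴ - |u j|⁴)`. Summing over the interior nodes and summing the discrete
Laplacian of `v + u` by parts against `v - u` (the Dirichlet values kill the boundary terms) turns
the remaining term into minus the change of the discrete gradient energy, via
`Re ((a + b) * conj (a - b)) = |a|² - |b|²`.
-/

open Finset ComplexConjugate

def secondDiff {R : Type*} [Ring R] (s : ℕ → R) (j : ℕ) : R :=
  s (j - 1) - 2 * s j + s (j + 1)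

theorem sum_Icc_secondDiff_mul {R : Type*} [CommRing R] (s c : ℕ → R) (M : ℕ) :
    ∑ j ∈ Icc 1 M, secondDiff s j * c j
      = -∑ j ∈ range M, (s (j + 1) - s j) * (c (j + 1) - c j)
        + (s (M + 1) - s M) * c M - (s 1 - s 0) * c 0 := by
  induction M with
  | zero => simp
  | succ M ih =>
    rw [sum_Icc_succ_top (by omega), ih, sum_range_succ]
    simp only [secondDiff, Nat.add_sub_cancel]
    ring

theorem sum_Icc_secondDiff_mul_of_boundary_eq_zero {R : Type*} [CommRing R] (s c : ℕ → R) (M : ℕ)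
    (hc0 : c 0 = 0) (hcM : c M = 0) :
    ∑ j ∈ Icc 1 (M - 1), secondDiff s j * c j
      = -∑ j ∈ range M, (s (j + 1) - s j) * (c (j + 1) - c j) := by
  cases M with
  | zero => simp
  | succ M =>
    have h := sum_Icc_secondDiff_mul s c (M + 1)
    rw [sum_Icc_succ_top (by omega), hc0, hcM] at h
    simpa using h

theorem Complex.re_add_mul_conj_sub (a b : ℂ) :
    ((a + b) * conj (a - b)).re = ‖a‖ ^ 2 - ‖b‖ ^ 2 := by
  simp only [Complex.mul_re, Complex.add_re, Complex.add_im, Complex.conj_re, Complex.conj_im,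
    Complex.sub_re, Complex.sub_im, Complex.sq_norm, Complex.normSq_apply]
  ring

theorem Complex.re_I_mul_div_ofReal_mul_conj (z : ℂ) (d : ℝ) :
    (Complex.I * z / d * conj z).re = 0 := by
  rw [div_mul_eq_mul_div, mul_assoc, Complex.mul_conj, Complex.div_ofReal_re]
  simp

theorem cn_local_energy_balance (dt dx g : ℝ) (a b La Lb : ℂ)
    (h : Complex.I * (b - a) / (dt : ℂ)
        = -(1/2 : ℂ) * (Lb / (dx : ℂ)^2 + La / (dx : ℂ)^2)
          + ((g : ℂ) / 2) * (((‖b‖^2 + ‖a‖^2 : ℝ)) : ℂ) * (b + a) / 2) :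
    g / 4 * (‖b‖ ^ 4 - ‖a‖ ^ 4) = 1 / (2 * dx ^ 2) * ((Lb + La) * conj (b - a)).re := by
  have hre := congrArg (fun z => (z * conj (b - a)).re) h
  have hrhs : (-(1/2 : ℂ) * (Lb / (dx : ℂ)^2 + La / (dx : ℂ)^2)
        + ((g : ℂ) / 2) * (((‖b‖^2 + ‖a‖^2 : ℝ)) : ℂ) * (b + a) / 2) * conj (b - a)
      = ((-(1 / (2 * dx ^ 2)) : ℝ) : ℂ) * ((Lb + La) * conj (b - a))
        + ((g / 4 * (‖b‖ ^ 2 + ‖a‖ ^ 2) : ℝ) : ℂ) * ((b + a) * conj (b - a)) := by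
    push_cast
    ring
  simp only [Complex.re_I_mul_div_ofReal_mul_conj, hrhs, Complex.add_re, Complex.re_ofReal_mul,
    Complex.re_add_mul_conj_sub] at hre
  linear_combination -hre

theorem cn_discrete_energy_conservation_general
    (M : ℕ) (dt dx g : ℝ)
    (u v : ℕ → ℂ)
    (hu0 : u 0 = 0) (huM : u M = 0) (hv0 : v 0 = 0) (hvM : v M = 0)
    (hscheme : ∀ j : ℕ, 1 ≤ j → j < M →
      Complex.I * (v j - u j) / (dt : ℂ)
        = -(1/2 : ℂ) * ((v (j-1) - 2 * v j + v (j+1)) / (dx : ℂ)^2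
              + (u (j-1) - 2 * u j + u (j+1)) / (dx : ℂ)^2)
          + ((g : ℂ) / 2) * (((‖v j‖^2 + ‖u j‖^2 : ℝ)) : ℂ)
              * (v j + u j) / 2) :
    (1 / (2 * dx^2)) * ∑ j ∈ Finset.range M, ‖v (j+1) - v j‖^2
        + (g / 4) * ∑ j ∈ Finset.Icc 1 (M-1), ‖v j‖^4
      = (1 / (2 * dx^2)) * ∑ j ∈ Finset.range M, ‖u (j+1) - u j‖^2
        + (g / 4) * ∑ j ∈ Finset.Icc 1 (M-1), ‖u j‖^4 := by
  have hlocal : ∀ j ∈ Icc 1 (M - 1), g / 4 * (‖v j‖ ^ 4 - ‖u j‖ ^ 4)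
      = 1 / (2 * dx ^ 2) * (secondDiff (v + u) j * conj ((v - u) j)).re := by
    intro j hj
    rw [mem_Icc] at hj
    convert cn_local_energy_balance dt dx g _ _ _ _ (hscheme j hj.1 (by omega)) using 5
    · simp only [secondDiff, Pi.add_apply]
      ring
    · rfl
  have hparts := sum_Icc_secondDiff_mul_of_boundary_eq_zero (v + u) (fun j => conj ((v - u) j)) M
    (by simp [hu0, hv0]) (by simp [huM, hvM])
  have hgrad : ∀ j, ((v + u) (j + 1) - (v + u) j) * (conj ((v - u) (j + 1)) - conj ((v - u) j))
      = ((v (j + 1) - v j) + (u (j + 1) - u j)) * conj ((v (j + 1) - v j) - (u (j + 1) - u j)) := by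
    intro j
    simp only [Pi.add_apply, Pi.sub_apply, map_sub]
    ring
  have hsum := congrArg Complex.re hparts
  simp only [hgrad, Complex.re_sum, Complex.neg_re, Complex.re_add_mul_conj_sub] at hsum
  have hpot : g / 4 * ∑ j ∈ Icc 1 (M - 1), (‖v j‖ ^ 4 - ‖u j‖ ^ 4)
      = -(1 / (2 * dx ^ 2)) * ∑ j ∈ range M, (‖v (j + 1) - v j‖ ^ 2 - ‖u (j + 1) - u j‖ ^ 2) := by
    rw [mul_sum, sum_congr rfl hlocal, ← mul_sum, hsum, neg_mul_comm]
  rw [sum_sub_distrib, sum_sub_distrib] at hpot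
  linear_combination hpot

/-- Discrete energy conservation of the semi-implicit Crank-Nicolson scheme for
the Gross-Pitaevskii equation with homogeneous Dirichlet boundary values. -/
theorem cn_discrete_energy_conservation
    (M : ℕ) (hM : 2 ≤ M) (dt dx g : ℝ) (hdt : 0 < dt) (hdx : 0 < dx)
    (u v : ℕ → ℂ)
    (hu0 : u 0 = 0) (huM : u M = 0) (hv0 : v 0 = 0) (hvM : v M = 0)
    (hscheme : ∀ j : ℕ, 1 ≤ j → j < M →
      Complex.I * (v j - u j) / (dt : ℂ)
        = -(1/2 : ℂ) * ((v (j-1) - 2 * v j + v (j+1)) / (dx : ℂ)^2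
              + (u (j-1) - 2 * u j + u (j+1)) / (dx : ℂ)^2)
          + ((g : ℂ) / 2) * (((‖v j‖^2 + ‖u j‖^2 : ℝ)) : ℂ)
              * (v j + u j) / 2) :
    (1 / (2 * dx^2)) * ∑ j ∈ Finset.range M, ‖v (j+1) - v j‖^2
        + (g / 4) * ∑ j ∈ Finset.Icc 1 (M-1), ‖v j‖^4
      = (1 / (2 * dx^2)) * ∑ j ∈ Finset.range M, ‖u (j+1) - u j‖^2
        + (g / 4) * ∑ j ∈ Finset.Icc 1 (M-1), ‖u j‖^4 :=
  cn_discrete_energy_conservation_general M dt dx g u v hu0 huM hv0 hvM hscheme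
end

section
/- Let M be a positive integer, Δt > 0, g ∈ ℝ, μ : {0,…,M−1} → ℝ, and let u : {0,…,M−1} → ℂ. Define the time-splitting spectral step: first w_j = exp(−i g |u_j|² Δt / 2) u_j for each j; then ŵ_l = Σ_{j=0}^{M−1} w_j exp(−2πi j l / M), z_j = (1/M) Σ_{l=0}^{M−1} exp(−i μ_l² Δt / 2) ŵ_l exp(2πi j l / M); and finally v_j = exp(−i g |z_j|² Δt / 2) z_j. Then the discrete mass is preserved over the full splitting step: Σ_{j=0}^{M−1} |v_j|² = Σ_{j=0}^{M−1} |u_j|². -/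
/-!
Each nonlinear half-step multiplies every grid value by a unimodular phase `exp (-i θ)` with
`θ` real, so it preserves every `|u_j|`. The linear step is the composition of the DFT, a
unimodular diagonal multiplier and the normalised inverse DFT; by the orthogonality
`∑_j ζ^(j a) conj (ζ^(j b)) = M δ_ab` of the powers of a primitive `M`-th root of unity `ζ`,
the DFT multiplies the discrete mass by `M` and the inverse DFT divides it by `M`.
-/

open Finset Complex
open scoped Real ComplexConjugate

lemma geom_sum_eq_zero_of_pow_eq_one {K : Type*} [DivisionRing K] {x : K} {n : ℕ}
    (hx : x ≠ 1) (hxn : x ^ n = 1) : ∑ i ∈ range n, x ^ i = 0 := by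
  rw [geom_sum_eq hx, hxn, sub_self, zero_div]

theorem IsPrimitiveRoot.sum_pow_mul_conj_pow {ζ : ℂ} {M : ℕ} (hζ : IsPrimitiveRoot ζ M)
    {a b : ℕ} (ha : a < M) (hb : b < M) :
    ∑ j ∈ range M, ζ ^ (j * a) * conj (ζ ^ (j * b)) = if a = b then (M : ℂ) else 0 := by
  have hζ0 : ζ ≠ 0 := hζ.ne_zero (by omega)
  have hconj : conj ζ = ζ⁻¹ := (inv_eq_conj (hζ.norm'_eq_one (by omega))).symm
  have hterm (j : ℕ) : ζ ^ (j * a) * conj (ζ ^ (j * b)) = (ζ ^ ((a : ℤ) - b)) ^ j := by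
    rw [map_pow, hconj, inv_pow, ← zpow_natCast, ← zpow_natCast, ← zpow_natCast, ← zpow_neg,
      ← zpow_add₀ hζ0, ← zpow_mul]
    push_cast
    ring_nf
  simp_rw [hterm]
  split_ifs with hab
  · simp [hab]
  · apply geom_sum_eq_zero_of_pow_eq_one
    · rw [Ne, hζ.zpow_eq_one_iff_dvd]
      intro hdvd
      have := Int.eq_zero_of_abs_lt_dvd hdvd (abs_lt.2 ⟨by omega, by omega⟩)
      omega
    · rw [← zpow_natCast, ← zpow_mul, mul_comm, zpow_mul, zpow_natCast, hζ.pow_eq_one, one_zpow]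

theorem IsPrimitiveRoot.sum_norm_sq_sum_mul_pow {ζ : ℂ} {M : ℕ} (hζ : IsPrimitiveRoot ζ M)
    (c : ℕ → ℂ) :
    ∑ j ∈ range M, ‖∑ l ∈ range M, c l * ζ ^ (j * l)‖ ^ 2 = M * ∑ l ∈ range M, ‖c l‖ ^ 2 := by
  apply ofReal_injective
  push_cast
  simp_rw [← mul_conj', map_sum, sum_mul_sum, map_mul]
  calc ∑ j ∈ range M, ∑ l ∈ range M, ∑ m ∈ range M,
        c l * ζ ^ (j * l) * (conj (c m) * conj (ζ ^ (j * m)))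
      = ∑ l ∈ range M, ∑ m ∈ range M,
          c l * conj (c m) * ∑ j ∈ range M, ζ ^ (j * l) * conj (ζ ^ (j * m)) := by
        rw [sum_comm]
        refine sum_congr rfl fun l _ => ?_
        rw [sum_comm]
        simp_rw [mul_sum]
        refine sum_congr rfl fun m _ => sum_congr rfl fun j _ => by ring
    _ = ∑ l ∈ range M, ∑ m ∈ range M, c l * conj (c m) * if l = m then (M : ℂ) else 0 := by
        refine sum_congr rfl fun l hl => sum_congr rfl fun m hm => ?_
        rw [hζ.sum_pow_mul_conj_pow (mem_range.1 hl) (mem_range.1 hm)]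
    _ = ∑ l ∈ range M, c l * conj (c l) * M := by
        refine sum_congr rfl fun l hl => ?_
        simp only [mul_ite, mul_zero, sum_ite_eq, if_pos hl]
    _ = M * ∑ l ∈ range M, c l * conj (c l) := by rw [← sum_mul, mul_comm]

lemma exp_two_pi_mul_I_mul_div_natCast (M j l : ℕ) :
    exp (2 * π * I * j * l / M) = exp (2 * π * I / M) ^ (j * l) := by
  rw [← exp_nat_mul]
  push_cast
  ring_nf

lemma norm_exp_mul_of_re_eq_zero {z : ℂ} (hz : z.re = 0) (x : ℂ) : ‖exp z * x‖ = ‖x‖ := by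
  rw [norm_mul, norm_exp, hz, Real.exp_zero, one_mul]

theorem sum_norm_sq_unnormalized_idft {M : ℕ} (hM : 0 < M) (c : ℕ → ℂ) :
    ∑ j ∈ range M, ‖∑ l ∈ range M, c l * exp (2 * π * I * j * l / M)‖ ^ 2
      = M * ∑ l ∈ range M, ‖c l‖ ^ 2 := by
  simp_rw [exp_two_pi_mul_I_mul_div_natCast]
  exact (isPrimitiveRoot_exp M hM.ne').sum_norm_sq_sum_mul_pow c

theorem sum_norm_sq_dft {M : ℕ} (hM : 0 < M) (w : ℕ → ℂ) :
    ∑ l ∈ range M, ‖∑ j ∈ range M, w j * exp (-(2 * π * I * j * l) / M)‖ ^ 2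
      = M * ∑ j ∈ range M, ‖w j‖ ^ 2 := by
  have hconj (l : ℕ) : ‖∑ j ∈ range M, w j * exp (-(2 * π * I * j * l) / M)‖
      = ‖∑ j ∈ range M, conj (w j) * exp (2 * π * I * l * j / M)‖ := by
    rw [← norm_conj, map_sum]
    refine congrArg _ (sum_congr rfl fun j _ => ?_)
    rw [map_mul, ← exp_conj]
    congr 2
    simp only [map_div₀, map_neg, map_mul, map_ofNat, conj_ofReal, conj_I, map_natCast]
    ring
  simp_rw [hconj, sum_norm_sq_unnormalized_idft hM, norm_conj]

theorem tssp_mass_conservation_general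
    (M : ℕ) (hM : 0 < M) (dt g : ℝ) (μ : ℕ → ℝ)
    (u w what z v : ℕ → ℂ)
    (hw : ∀ j : ℕ, w j
      = Complex.exp (-Complex.I * (g : ℂ) * ((‖u j‖^2 : ℝ) : ℂ) * ((dt : ℂ) / 2)) * u j)
    (hwhat : ∀ l : ℕ, what l
      = ∑ j ∈ Finset.range M,
          w j * Complex.exp (-(2 * (Real.pi : ℂ) * Complex.I * (j : ℂ) * (l : ℂ)) / (M : ℂ)))
    (hz : ∀ j : ℕ, z j
      = (1 / (M : ℂ)) * ∑ l ∈ Finset.range M,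
          Complex.exp (-Complex.I * (((μ l)^2 : ℝ) : ℂ) * ((dt : ℂ) / 2)) * what l
            * Complex.exp ((2 * (Real.pi : ℂ) * Complex.I * (j : ℂ) * (l : ℂ)) / (M : ℂ)))
    (hv : ∀ j : ℕ, v j
      = Complex.exp (-Complex.I * (g : ℂ) * ((‖z j‖^2 : ℝ) : ℂ) * ((dt : ℂ) / 2)) * z j) :
    ∑ j ∈ Finset.range M, ‖v j‖^2 = ∑ j ∈ Finset.range M, ‖u j‖^2 := by
  have hvz (j : ℕ) : ‖v j‖ = ‖z j‖ := by rw [hv, norm_exp_mul_of_re_eq_zero (by simp [sq])]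
  have hwu (j : ℕ) : ‖w j‖ = ‖u j‖ := by rw [hw, norm_exp_mul_of_re_eq_zero (by simp [sq])]
  have hphase (l : ℕ) :
      ‖exp (-I * ((μ l ^ 2 : ℝ) : ℂ) * (dt / 2)) * what l‖ = ‖what l‖ :=
    norm_exp_mul_of_re_eq_zero (by simp [sq]) _
  have hM' : (M : ℝ) ≠ 0 := by positivity
  calc ∑ j ∈ range M, ‖v j‖ ^ 2
      = (1 / M) ^ 2 * (M * ∑ l ∈ range M, ‖what l‖ ^ 2) := by
        simp_rw [hvz, hz, norm_mul, mul_pow, ← mul_sum, sum_norm_sq_unnormalized_idft hM, hphase]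
        simp
    _ = (1 / M) ^ 2 * (M * (M * ∑ j ∈ range M, ‖u j‖ ^ 2)) := by
        simp_rw [hwhat, sum_norm_sq_dft hM, hwu]
    _ = ∑ j ∈ range M, ‖u j‖ ^ 2 := by field_simp

/-- The full Strang time-splitting spectral (TSSP) step for the
Gross-Pitaevskii equation preserves the discrete mass. -/
theorem tssp_mass_conservation
    (M : ℕ) (hM : 0 < M) (dt g : ℝ) (hdt : 0 < dt) (μ : ℕ → ℝ)
    (u w what z v : ℕ → ℂ)
    (hw : ∀ j : ℕ, w j
      = Complex.exp (-Complex.I * (g : ℂ) * ((‖u j‖^2 : ℝ) : ℂ) * ((dt : ℂ) / 2)) * u j)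
    (hwhat : ∀ l : ℕ, what l
      = ∑ j ∈ Finset.range M,
          w j * Complex.exp (-(2 * (Real.pi : ℂ) * Complex.I * (j : ℂ) * (l : ℂ)) / (M : ℂ)))
    (hz : ∀ j : ℕ, z j
      = (1 / (M : ℂ)) * ∑ l ∈ Finset.range M,
          Complex.exp (-Complex.I * (((μ l)^2 : ℝ) : ℂ) * ((dt : ℂ) / 2)) * what l
            * Complex.exp ((2 * (Real.pi : ℂ) * Complex.I * (j : ℂ) * (l : ℂ)) / (M : ℂ)))
    (hv : ∀ j : ℕ, v j
      = Complex.exp (-Complex.I * (g : ℂ) * ((‖z j‖^2 : ℝ) : ℂ) * ((dt : ℂ) / 2)) * z j) :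
    ∑ j ∈ Finset.range M, ‖v j‖^2 = ∑ j ∈ Finset.range M, ‖u j‖^2 :=
  tssp_mass_conservation_general M hM dt g μ u w what z v hw hwhat hz hv
end
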